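/- Let (fₙ) be a sequence of continuous functions on [0,1] converging pointwise to f : [0,1] → ℝ. Suppose that for every ε > 0 there exists δ > 0 such that ∫₀¹ ω(fₙ, δ) < ε for all n. Then f is Riemann integrable on [0,1]. -/

import Mathlib

noncomputable def osc (f : ℝ → ℝ) (ε : ℝ) (x : ℝ) : ℝ :=
  sSup {d : ℝ | ∃ t ∈ Set.Icc (x - ε) (x + ε) ∩ Set.Icc (0:ℝ) 1,
                ∃ s ∈ Set.Icc (x - ε) (x + ε) ∩ Set.Icc (0:ℝ) 1,
                d = |f t - f s|}

/-- A tagged partition of `[0,1]`. -/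
structure TaggedPartition where
  n : ℕ
  x : ℕ → ℝ
  t : ℕ → ℝ
  n_pos : 0 < n
  x_zero : x 0 = 0
  x_last : x n = 1
  x_mono : ∀ k < n, x k < x (k+1)
  t_mem : ∀ k < n, t k ∈ Set.Icc (x k) (x (k+1))

/-- The mesh of the tagged partition is at most `δ`. -/
def TaggedPartition.meshLE (τ : TaggedPartition) (δ : ℝ) : Prop :=
  ∀ k < τ.n, τ.x (k+1) - τ.x k ≤ δ

/-- The Riemann sum of `f` over a tagged partition of `[0,1]`. -/
def riemannSum (f : ℝ → ℝ) (τ : TaggedPartition) : ℝ :=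
  ∑ k ∈ Finset.range τ.n, f (τ.t k) * (τ.x (k+1) - τ.x k)

/-- Riemann integrability on `[0,1]`: Riemann sums converge as the mesh tends to 0. -/
def RiemannIntegrableOn01 (f : ℝ → ℝ) : Prop :=
  ∃ A : ℝ, ∀ ε > 0, ∃ δ > 0, ∀ τ : TaggedPartition,
    τ.meshLE δ → |riemannSum f τ - A| < ε

/-! For continuous `g` and a tagged partition of mesh at most `δ`, each term `g tₖ (xₖ₊₁ - xₖ)`
differs from `∫_{xₖ}^{xₖ₊₁} g` by at most `∫_{xₖ}^{xₖ₊₁} ω(g, δ)`, since both `tₖ` and every point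
of the cell lie within `δ` of any point of the cell. Hence `|S(g, τ) - ∫ g| ≤ ∫ ω(g, δ)`, and by
hypothesis this is uniform in `n` for `g = fₙ`. Fixing one fine partition, whose Riemann sums
for `fₙ` converge, shows that `∫ fₙ` is Cauchy, with limit `A`; letting `n → ∞` in the uniform
estimate for an arbitrary fine partition `τ` gives `|S(f, τ) - A| ≤ ε`. -/

open Set Filter Topology

theorem continuousOn_osc {g : ℝ → ℝ} {δ : ℝ} (hδ : 0 ≤ δ) (hg : ContinuousOn g (Icc 0 1)) :
    ContinuousOn (osc g δ) (Icc 0 1) := by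
  set G : ℝ → ℝ := fun y => g (max 0 (min y 1))
  have hG : Continuous G := hg.comp_continuous (by fun_prop)
    fun y => ⟨le_max_left _ _, max_le zero_le_one (min_le_right _ _)⟩
  have hGg : ∀ y ∈ Icc (0:ℝ) 1, G y = g y := fun y hy => by
    simp only [G, min_eq_left hy.2, max_eq_right hy.1]
  -- Parametrising the window by `[0, 1]` makes `osc g δ` a supremum over a fixed compact set
  -- of a jointly continuous function.
  set p : ℝ → ℝ → ℝ := fun x u => (1 - u) * ((x - δ) ⊔ 0) + u * ((x + δ) ⊓ 1)
  have hwindow : ∀ x ∈ Icc (0:ℝ) 1, Icc (x - δ) (x + δ) ∩ Icc 0 1 = p x '' Icc 0 1 := by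
    intro x ⟨hx0, hx1⟩
    rw [Icc_inter_Icc, ← segment_eq_Icc (sup_le (le_inf (by linarith) (by linarith))
      (le_inf (by linarith) zero_le_one)),
      segment_eq_image]
    simp only [smul_eq_mul, p]
  have hK : IsCompact (Icc (0:ℝ) 1 ×ˢ Icc (0:ℝ) 1) := isCompact_Icc.prod isCompact_Icc
  have hcont := hK.continuous_sSup
    (f := fun x (q : ℝ × ℝ) => |G (p x q.1) - G (p x q.2)|) (by fun_prop)
  refine hcont.continuousOn.congr fun x hx => ?_
  have hp : ∀ u ∈ Icc (0:ℝ) 1, p x u ∈ Icc 0 1 := fun u hu =>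
    (inter_subset_right (hwindow x hx ▸ mem_image_of_mem _ hu) :)
  simp only [osc, hwindow x hx]
  congr 1
  ext d
  constructor
  · rintro ⟨_, ⟨u, hu, rfl⟩, _, ⟨v, hv, rfl⟩, rfl⟩
    exact ⟨(u, v), ⟨hu, hv⟩, by simp only [hGg _ (hp u hu), hGg _ (hp v hv)]⟩
  · rintro ⟨⟨u, v⟩, ⟨hu, hv⟩, rfl⟩
    exact ⟨_, ⟨u, hu, rfl⟩, _, ⟨v, hv, rfl⟩, by simp only [hGg _ (hp u hu), hGg _ (hp v hv)]⟩

theorem abs_sub_le_osc {g : ℝ → ℝ} {δ x t s : ℝ} (hg : ContinuousOn g (Icc 0 1))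
    (ht : t ∈ Icc (x - δ) (x + δ) ∩ Icc 0 1) (hs : s ∈ Icc (x - δ) (x + δ) ∩ Icc 0 1) :
    |g t - g s| ≤ osc g δ x := by
  obtain ⟨M, hM⟩ := isCompact_Icc.exists_bound_of_continuousOn hg
  refine le_csSup ⟨M + M, ?_⟩ ⟨t, ht, s, hs, rfl⟩
  rintro _ ⟨t', ht', s', hs', rfl⟩
  exact (abs_sub _ _).trans (add_le_add (hM t' ht'.2) (hM s' hs'.2))

theorem abs_mul_sub_integral_le_integral_osc {g : ℝ → ℝ} {δ a b t : ℝ}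
    (hg : ContinuousOn g (Icc 0 1)) (hsub : Icc a b ⊆ Icc 0 1) (hlen : b - a ≤ δ)
    (ht : t ∈ Icc a b) :
    |g t * (b - a) - ∫ x in a..b, g x| ≤ ∫ x in a..b, osc g δ x := by
  have hab : a ≤ b := ht.1.trans ht.2
  have hgab : ContinuousOn g (Icc a b) := hg.mono hsub
  calc |g t * (b - a) - ∫ x in a..b, g x| = |∫ x in a..b, (g t - g x)| := by
        rw [intervalIntegral.integral_sub intervalIntegrable_const
          (hgab.intervalIntegrable_of_Icc hab), intervalIntegral.integral_const, smul_eq_mul,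
          mul_comm]
    _ ≤ ∫ x in a..b, |g t - g x| := intervalIntegral.abs_integral_le_integral_abs hab
    _ ≤ ∫ x in a..b, osc g δ x := by
        refine intervalIntegral.integral_mono_on hab
          ((continuousOn_const.sub hgab).abs.intervalIntegrable_of_Icc hab)
          (((continuousOn_osc (by linarith) hg).mono hsub).intervalIntegrable_of_Icc hab)
          fun y hy => abs_sub_le_osc hg ⟨⟨?_, ?_⟩, hsub ht⟩ ⟨⟨?_, ?_⟩, hsub hy⟩ <;>
        linarith [ht.1, ht.2, hy.1, hy.2]

namespace TaggedPartition

theorem x_le_of_le (τ : TaggedPartition) {i j : ℕ} (hij : i ≤ j) (hj : j ≤ τ.n) :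
    τ.x i ≤ τ.x j := by
  induction j, hij using Nat.le_induction with
  | base => rfl
  | succ j _ ih => exact (ih (by omega)).trans (τ.x_mono j (by omega)).le

theorem x_mem_Icc (τ : TaggedPartition) {k : ℕ} (hk : k ≤ τ.n) : τ.x k ∈ Icc (0:ℝ) 1 :=
  ⟨τ.x_zero ▸ τ.x_le_of_le k.zero_le hk, τ.x_last ▸ τ.x_le_of_le hk le_rfl⟩

theorem Icc_subset_Icc_zero_one (τ : TaggedPartition) {k : ℕ} (hk : k < τ.n) :
    Icc (τ.x k) (τ.x (k + 1)) ⊆ Icc 0 1 :=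
  Set.Icc_subset_Icc (τ.x_mem_Icc hk.le).1 (τ.x_mem_Icc hk).2

theorem t_mem_Icc (τ : TaggedPartition) {k : ℕ} (hk : k < τ.n) : τ.t k ∈ Icc (0:ℝ) 1 :=
  τ.Icc_subset_Icc_zero_one hk (τ.t_mem k hk)

theorem sum_integral_eq {g : ℝ → ℝ} (hg : ContinuousOn g (Icc 0 1)) (τ : TaggedPartition) :
    ∑ k ∈ Finset.range τ.n, ∫ x in τ.x k..τ.x (k + 1), g x = ∫ x in (0:ℝ)..1, g x := by
  rw [intervalIntegral.sum_integral_adjacent_intervals fun k hk =>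
    (hg.mono (τ.Icc_subset_Icc_zero_one hk)).intervalIntegrable_of_Icc (τ.x_mono k hk).le,
    τ.x_zero, τ.x_last]

theorem exists_meshLE {δ : ℝ} (hδ : 0 < δ) : ∃ τ : TaggedPartition, τ.meshLE δ := by
  obtain ⟨m, hm⟩ := exists_nat_gt (1 / δ)
  have hm0 : (0:ℝ) < m := (one_div_pos.2 hδ).trans hm
  refine ⟨{ n := m, x := fun k => k / m, t := fun k => k / m
            n_pos := by exact_mod_cast hm0
            x_zero := by simp
            x_last := div_self hm0.ne'
            x_mono := fun k _ => by gcongr; linarith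
            t_mem := fun k _ => ⟨le_rfl, by gcongr; linarith⟩ }, fun k _ => ?_⟩
  show ((k + 1 : ℕ) : ℝ) / m - k / m ≤ δ
  rw [← sub_div, Nat.cast_succ, add_sub_cancel_left, div_le_iff₀ hm0]
  rw [div_lt_iff₀ hδ] at hm
  linarith

end TaggedPartition

theorem abs_riemannSum_sub_integral_le {g : ℝ → ℝ} {δ : ℝ} (hg : ContinuousOn g (Icc 0 1))
    (τ : TaggedPartition) (hτ : τ.meshLE δ) :
    |riemannSum g τ - ∫ x in (0:ℝ)..1, g x| ≤ ∫ x in (0:ℝ)..1, osc g δ x := by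
  have hδ : 0 ≤ δ := (sub_nonneg.2 (τ.x_mono 0 τ.n_pos).le).trans (hτ 0 τ.n_pos)
  rw [← τ.sum_integral_eq hg, ← τ.sum_integral_eq (continuousOn_osc hδ hg), riemannSum,
    ← Finset.sum_sub_distrib]
  refine (Finset.abs_sum_le_sum_abs _ _).trans (Finset.sum_le_sum fun k hk => ?_)
  have hk := Finset.mem_range.1 hk
  exact abs_mul_sub_integral_le_integral_osc hg (τ.Icc_subset_Icc_zero_one hk) (hτ k hk)
    (τ.t_mem k hk)

theorem tendsto_riemannSum {ι : Type*} {l : Filter ι} {F : ι → ℝ → ℝ} {f : ℝ → ℝ}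
    (h : ∀ x ∈ Icc (0:ℝ) 1, Tendsto (F · x) l (𝓝 (f x))) (τ : TaggedPartition) :
    Tendsto (fun i => riemannSum (F i) τ) l (𝓝 (riemannSum f τ)) :=
  tendsto_finsetSum _ fun _ hk => (h _ (τ.t_mem_Icc (Finset.mem_range.1 hk))).mul_const _

theorem cauchySeq_of_forall_dist_le {β E : Type*} [Nonempty β] [SemilatticeSup β]
    [PseudoMetricSpace E] {a : β → E}
    (h : ∀ ε > 0, ∃ b : β → E, CauchySeq b ∧ ∀ n, dist (a n) (b n) ≤ ε) : CauchySeq a := by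
  refine Metric.cauchySeq_iff.2 fun ε hε => ?_
  obtain ⟨b, hb, hab⟩ := h (ε / 4) (by positivity)
  obtain ⟨N, hN⟩ := Metric.cauchySeq_iff.1 hb (ε / 4) (by positivity)
  refine ⟨N, fun m hm n hn => ?_⟩
  calc dist (a m) (a n) ≤ dist (a m) (b m) + dist (b m) (b n) + dist (b n) (a n) :=
        dist_triangle4 _ _ _ _
    _ < ε := by linarith [hab m, hab n, hN m hm n hn, dist_comm (a n) (b n)]

theorem stmt_5 (f : ℝ → ℝ) (fseq : ℕ → ℝ → ℝ)
    (hcont : ∀ n, ContinuousOn (fseq n) (Set.Icc (0:ℝ) 1))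
    (hptwise : ∀ x ∈ Set.Icc (0:ℝ) 1,
      Filter.Tendsto (fun n => fseq n x) Filter.atTop (nhds (f x)))
    (hosc : ∀ ε > (0:ℝ), ∃ δ > (0:ℝ),
      ∀ n, (∫ x in (0:ℝ)..1, osc (fseq n) δ x) < ε) :
    RiemannIntegrableOn01 f := by
  set a : ℕ → ℝ := fun n => ∫ x in (0:ℝ)..1, fseq n x
  have happrox : ∀ ε > 0, ∃ δ > 0, ∀ τ : TaggedPartition, τ.meshLE δ →
      ∀ n, |riemannSum (fseq n) τ - a n| ≤ ε := fun ε hε => by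
    obtain ⟨δ, hδ, h⟩ := hosc ε hε
    exact ⟨δ, hδ, fun τ hτ n => (abs_riemannSum_sub_integral_le (hcont n) τ hτ).trans (h n).le⟩
  have hsum := tendsto_riemannSum hptwise
  obtain ⟨A, hA⟩ : ∃ A, Tendsto a atTop (𝓝 A) :=
    cauchySeq_tendsto_of_complete <| cauchySeq_of_forall_dist_le fun ε hε => by
      obtain ⟨δ, hδ, h⟩ := happrox ε hε
      obtain ⟨τ, hτ⟩ := TaggedPartition.exists_meshLE hδ
      exact ⟨_, (hsum τ).cauchySeq, fun n => by rw [Real.dist_eq, abs_sub_comm]; exact h τ hτ n⟩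
  refine ⟨A, fun ε hε => ?_⟩
  obtain ⟨δ, hδ, h⟩ := happrox (ε / 2) (half_pos hε)
  refine ⟨δ, hδ, fun τ hτ => ?_⟩
  have hlim : |riemannSum f τ - A| ≤ ε / 2 :=
    le_of_tendsto ((hsum τ).sub hA).abs (Eventually.of_forall (h τ hτ))
  linarith
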